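/- arXiv:1712.01952 — 6 statements merged into one kernel-verified Lean document; each statement's English description precedes it below -/
import Mathlib

section
/- The function R(a,b,P), defined on the set S_d = {(a,b,P) : a ≤ b, deg P = d, P'(x)P'(y) ≥ 0 for all x,y ∈ [a,b]} as the point of [a,b] where |P| attains its minimum (given by the explicit case formula), is continuous on S_d, where monic degree-d polynomials are identified with ℝ^d via their coefficients. -/
/-!
On `S_d` the polynomial `P` is monotone on `[a, b]`, and for `d ≠ 0` it is not constant on any
subinterval, so `Q(x) = (P(b) - P(a)) P(x)` is strictly increasing on `[a, b]`. The case formula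
then says exactly that `R(a, b, P)` is the point of `[a, b]` where `Q` changes sign. Since `Q`
depends continuously on `(a, b, P)` for each fixed `x`, the sign-change point moves
continuously: a strict sign of `Q` at a fixed `x` persists under small perturbations.
For `d = 0` we have `P = 1` and `R(a, b, P) = a`.
-/

open Polynomial Set

noncomputable def monicPoly (d : ℕ) (c : Fin d → ℝ) : Polynomial ℝ :=
  X ^ d + ∑ i : Fin d, C (c i) * X ^ (i : ℕ)

open Filter Topology

def IsSignChange (g : ℝ → ℝ) (a b t : ℝ) : Prop :=
  t ∈ Icc a b ∧ (∀ x ∈ Icc a b, x < t → g x < 0) ∧ ∀ x ∈ Icc a b, t < x → 0 < g x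

theorem IsSignChange.neg {g : ℝ → ℝ} {a b t : ℝ} (h : IsSignChange g a b t) :
    IsSignChange (fun x => -g (-x)) (-b) (-a) (-t) := by
  obtain ⟨⟨hat, htb⟩, hneg, hpos⟩ := h
  refine ⟨⟨neg_le_neg htb, neg_le_neg hat⟩, ?_, ?_⟩
  · intro x hx hxt
    exact neg_neg_of_pos <|
      hpos (-x) ⟨le_neg_of_le_neg hx.2, neg_le.1 hx.1⟩ (lt_neg_of_lt_neg hxt)
  · intro x hx htx
    exact neg_pos_of_neg <|
      hneg (-x) ⟨le_neg_of_le_neg hx.2, neg_le.1 hx.1⟩ (neg_lt.1 htx)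

theorem isSignChange_of_strictMonoOn {g : ℝ → ℝ} {a b t : ℝ}
    (hg : StrictMonoOn g (Icc a b)) (ht : t ∈ Icc a b)
    (hlo : a < t → g t ≤ 0) (hhi : t < b → 0 ≤ g t) : IsSignChange g a b t :=
  ⟨ht, fun _ hx hxt => (hg hx ht hxt).trans_le (hlo (hx.1.trans_lt hxt)),
    fun _ hx htx => (hhi (htx.trans_le hx.2)).trans_lt (hg ht hx htx)⟩

section SignChange

variable {X : Type*} [TopologicalSpace X] {S : Set X} {a b f : X → ℝ} {g : X → ℝ → ℝ}

theorem eventually_lt_of_isSignChange {p₀ : X} (hp₀ : p₀ ∈ S)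
    (ha : ContinuousWithinAt a S p₀) (hb : ContinuousWithinAt b S p₀)
    (hg : ∀ x, ContinuousWithinAt (g · x) S p₀)
    (hf : ∀ p ∈ S, IsSignChange (g p) (a p) (b p) (f p)) {l : ℝ} (hl : l < f p₀) :
    ∀ᶠ p in 𝓝[S] p₀, l < f p := by
  obtain ⟨⟨-, hfb₀⟩, hneg₀, -⟩ := hf p₀ hp₀
  rcases lt_or_ge l (a p₀) with hla | hla
  · filter_upwards [ha.eventually_const_lt hla, self_mem_nhdsWithin] with p hlp hp
    exact hlp.trans_le (hf p hp).1.1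
  -- Compare at an intermediate point `m`, where `g p₀ m < 0` is strict.
  obtain ⟨m, hlm, hmf⟩ := exists_between hl
  have hgm : g p₀ m < 0 := hneg₀ m ⟨hla.trans hlm.le, (hmf.trans_le hfb₀).le⟩ hmf
  filter_upwards [(hg m).eventually_lt_const hgm,
    hb.eventually_const_lt (hmf.trans_le hfb₀), self_mem_nhdsWithin] with p hgpm hmb hp
  obtain ⟨⟨hap, -⟩, -, hpos⟩ := hf p hp
  by_contra! hfl
  exact (hpos m ⟨hap.trans (hfl.trans hlm.le), hmb.le⟩ (hfl.trans_lt hlm)).not_gt hgpm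

theorem continuousOn_of_isSignChange (ha : ContinuousOn a S) (hb : ContinuousOn b S)
    (hg : ∀ x, ContinuousOn (g · x) S)
    (hf : ∀ p ∈ S, IsSignChange (g p) (a p) (b p) (f p)) : ContinuousOn f S := by
  intro p₀ hp₀
  refine tendsto_order.2 ⟨fun l hl => ?_, fun u hu => ?_⟩
  · exact eventually_lt_of_isSignChange hp₀ (ha p₀ hp₀) (hb p₀ hp₀) (hg · p₀ hp₀) hf hl
  · have := eventually_lt_of_isSignChange (a := fun p => -b p) (b := fun p => -a p)
      (f := fun p => -f p) (g := fun p x => -g p (-x)) hp₀ (hb p₀ hp₀).neg (ha p₀ hp₀).neg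
      (fun x => (hg (-x) p₀ hp₀).neg) (fun p hp => (hf p hp).neg) (neg_lt_neg hu)
    exact this.mono fun p h => neg_lt_neg_iff.1 h

end SignChange

theorem monotoneOn_or_antitoneOn_of_deriv_mul_nonneg {f : ℝ → ℝ} {D : Set ℝ}
    (hD : Convex ℝ D) (hf : ContinuousOn f D) (hf' : DifferentiableOn ℝ f (interior D))
    (h : ∀ x ∈ interior D, ∀ y ∈ interior D, 0 ≤ deriv f x * deriv f y) :
    MonotoneOn f D ∨ AntitoneOn f D := by
  by_cases hpos : ∀ x ∈ interior D, 0 ≤ deriv f x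
  · exact .inl (monotoneOn_of_deriv_nonneg hD hf hf' hpos)
  · push Not at hpos
    obtain ⟨y, hy, hneg⟩ := hpos
    exact .inr (antitoneOn_of_deriv_nonpos hD hf hf' fun x hx => by nlinarith [h x hx y hy])

namespace Polynomial

theorem exists_eval_ne_of_lt {P : ℝ[X]} (hP : 0 < P.degree) {x y : ℝ} (hxy : x < y) :
    ∃ z ∈ Icc x y, P.eval z ≠ P.eval x := by
  by_contra! h
  have hconst : P = C (P.eval x) :=
    eq_of_infinite_eval_eq _ _ ((Icc_infinite hxy).mono fun z hz => by simpa using h z hz)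
  rw [hconst] at hP
  exact hP.not_ge degree_C_le

theorem injOn_of_monotoneOn_or_antitoneOn {P : ℝ[X]} (hP : 0 < P.degree) {s : Set ℝ}
    (hs : s.OrdConnected) (hm : MonotoneOn (P.eval ·) s ∨ AntitoneOn (P.eval ·) s) :
    s.InjOn (P.eval ·) := by
  have hne : ∀ x ∈ s, ∀ y ∈ s, x < y → P.eval x ≠ P.eval y := by
    intro x hx y hy hxy hexy
    obtain ⟨z, hz, hne⟩ := exists_eval_ne_of_lt hP hxy
    have hzs : z ∈ s := hs.out hx hy hz
    apply hne
    rcases hm with hm | hm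
    · exact le_antisymm (hexy ▸ hm hzs hy hz.2) (hm hx hzs hz.1)
    · exact le_antisymm (hm hx hzs hz.1) (hexy ▸ hm hzs hy hz.2)
  intro x hx y hy hexy
  by_contra hxy
  rcases lt_or_gt_of_ne hxy with hxy | hxy
  · exact hne x hx y hy hxy hexy
  · exact hne y hy x hx hxy hexy.symm

end Polynomial

theorem strictMonoOn_sub_mul_of_strictMonoOn_or_strictAntiOn {g : ℝ → ℝ} {a b : ℝ}
    (hab : a ≤ b) (hg : StrictMonoOn g (Icc a b) ∨ StrictAntiOn g (Icc a b)) :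
    StrictMonoOn (fun x => (g b - g a) * g x) (Icc a b) := by
  rcases hab.eq_or_lt with rfl | hab
  · simp
  have ha : a ∈ Icc a b := left_mem_Icc.2 hab.le
  have hb : b ∈ Icc a b := right_mem_Icc.2 hab.le
  intro x hx y hy hxy
  rcases hg with hg | hg
  · exact mul_lt_mul_of_pos_left (hg hx hy hxy) (sub_pos.2 (hg ha hb hab))
  · exact mul_lt_mul_of_neg_left (hg hx hy hxy) (sub_neg.2 (hg ha hb hab))

theorem Polynomial.strictMonoOn_sub_mul_eval_of_deriv_mul_nonneg {P : ℝ[X]} (hP : 0 < P.degree)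
    {a b : ℝ} (hab : a ≤ b)
    (hder : ∀ x ∈ Icc a b, ∀ y ∈ Icc a b, 0 ≤ P.derivative.eval x * P.derivative.eval y) :
    StrictMonoOn (fun x => (P.eval b - P.eval a) * P.eval x) (Icc a b) := by
  have hmono := monotoneOn_or_antitoneOn_of_deriv_mul_nonneg (convex_Icc a b)
    P.continuous.continuousOn P.differentiable.differentiableOn
    fun x hx y hy => by
      simpa only [Polynomial.deriv] using hder x (interior_subset hx) y (interior_subset hy)
  have hinj := P.injOn_of_monotoneOn_or_antitoneOn hP ordConnected_Icc hmono
  exact strictMonoOn_sub_mul_of_strictMonoOn_or_strictAntiOn hab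
    (hmono.imp (·.strictMonoOn_of_injOn hinj) (·.strictAntiOn_of_injOn hinj))

theorem eval_monicPoly (d : ℕ) (c : Fin d → ℝ) (x : ℝ) :
    (monicPoly d c).eval x = x ^ d + ∑ i : Fin d, c i * x ^ (i : ℕ) := by
  simp [monicPoly, eval_finsetSum]

theorem degree_monicPoly (d : ℕ) (c : Fin d → ℝ) : (monicPoly d c).degree = d := by
  rw [monicPoly, degree_add_eq_left_of_degree_lt] <;> rw [degree_X_pow]
  exact degree_sum_fin_lt _

/-- any function `f` satisfying the case formula defining
`R(a,b,P)` on the set `S_d` of triples `(a,b,P)` with `a ≤ b` and `P` (monic of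
degree `d`, identified with its coefficient vector in `ℝ^d`) weakly monotone on
`[a,b]`, is continuous on `S_d`. -/
theorem R_continuousOn
    (d : ℕ) (f : ℝ × ℝ × (Fin d → ℝ) → ℝ)
    (S : Set (ℝ × ℝ × (Fin d → ℝ)))
    (hS : S = {p | p.1 ≤ p.2.1 ∧
      ∀ x ∈ Set.Icc p.1 p.2.1, ∀ y ∈ Set.Icc p.1 p.2.1,
        0 ≤ (monicPoly d p.2.2).derivative.eval x *
            (monicPoly d p.2.2).derivative.eval y})
    (hf : ∀ p ∈ S,
      (p.1 = p.2.1 ∧ f p = p.1) ∨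
      (p.1 < p.2.1 ∧
        0 ≤ ((monicPoly d p.2.2).eval p.2.1 - (monicPoly d p.2.2).eval p.1) *
            (monicPoly d p.2.2).eval p.1 ∧ f p = p.1) ∨
      (p.1 < p.2.1 ∧
        ¬ 0 ≤ ((monicPoly d p.2.2).eval p.2.1 - (monicPoly d p.2.2).eval p.1) *
            (monicPoly d p.2.2).eval p.1 ∧
        ((monicPoly d p.2.2).eval p.2.1 - (monicPoly d p.2.2).eval p.1) *
            (monicPoly d p.2.2).eval p.2.1 ≤ 0 ∧ f p = p.2.1) ∨
      (p.1 < p.2.1 ∧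
        ¬ 0 ≤ ((monicPoly d p.2.2).eval p.2.1 - (monicPoly d p.2.2).eval p.1) *
            (monicPoly d p.2.2).eval p.1 ∧
        ¬ ((monicPoly d p.2.2).eval p.2.1 - (monicPoly d p.2.2).eval p.1) *
            (monicPoly d p.2.2).eval p.2.1 ≤ 0 ∧
        f p ∈ Set.Ioo p.1 p.2.1 ∧ (monicPoly d p.2.2).eval (f p) = 0)) :
    ContinuousOn f S := by
  rcases eq_or_ne d 0 with rfl | hd
  · refine continuousOn_fst.congr fun p hp => ?_
    rcases hf p hp with ⟨-, h⟩ | ⟨-, -, h⟩ | ⟨-, h, -⟩ | ⟨-, h, -⟩ <;> simp_all [monicPoly]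
  subst hS
  refine continuousOn_of_isSignChange (g := fun p x =>
      ((monicPoly d p.2.2).eval p.2.1 - (monicPoly d p.2.2).eval p.1) *
        (monicPoly d p.2.2).eval x)
    continuousOn_fst continuousOn_snd.fst (fun x => ?_) fun p hp => ?_
  · simp only [eval_monicPoly]
    fun_prop
  have hQ := strictMonoOn_sub_mul_eval_of_deriv_mul_nonneg
    (by rw [degree_monicPoly]; exact_mod_cast Nat.pos_of_ne_zero hd) hp.1 hp.2
  rcases hf p hp with ⟨heq, ht⟩ | ⟨-, hQa, ht⟩ | ⟨-, -, hQb, ht⟩ | ⟨-, -, -, hft, hroot⟩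
  · rw [ht]
    exact isSignChange_of_strictMonoOn hQ ⟨le_rfl, hp.1⟩ (absurd · (lt_irrefl _))
      fun _ => by simp [heq]
  · rw [ht]
    exact isSignChange_of_strictMonoOn hQ ⟨le_rfl, hp.1⟩ (absurd · (lt_irrefl _)) fun _ => hQa
  · rw [ht]
    exact isSignChange_of_strictMonoOn hQ ⟨hp.1, le_rfl⟩ (fun _ => hQb) (absurd · (lt_irrefl _))
  · refine isSignChange_of_strictMonoOn hQ (Ioo_subset_Icc_self hft) ?_ ?_ <;>
      simp [hroot]
end

section
/- If P is a monic real polynomial of degree d whose d roots are all real (P is hyperbolic), and u is the j-th real root of P in increasing order (with multiplicity, 1 ≤ j ≤ d), then the j-th virtual root ρ_{d,j}(P) equals u. -/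
/-!
Induction on `d`. Rolle's theorem, with multiplicities and on any interval, makes the `d - 1`
roots `s₁ ≤ ⋯ ≤ s_{d-1}` of `P'` interlace the roots `r₁ ≤ ⋯ ≤ r_d` of a hyperbolic `P`:
`r_j ≤ s_j ≤ r_{j+1}`. By induction the virtual roots of `P'/d` are the `s_j`, so `ρ_{d,j}(P)`
minimises `|P|` on `[s_{j-1}, s_j]` (the Cauchy bound replacing a missing end). This interval
contains `r_j` and no critical point of `P`, so `r_j` is the only zero of `P` there, hence the
minimiser.
-/

open Polynomial Set

noncomputable def dCoeff {d : ℕ} (c : Fin (d + 1) → ℝ) : Fin d → ℝ :=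
  fun i => c i.succ * ((i : ℕ) + 1) / (d + 1)

noncomputable def bnd {d : ℕ} (c : Fin d → ℝ) : ℝ := 1 + ⨆ i, |c i|

/-- The point of `[a,b]` where `|P|` attains its minimum. -/
noncomputable def Rmin (a b : ℝ) (P : Polynomial ℝ) : ℝ :=
  if h : a ≤ b then
    (isCompact_Icc.exists_isMinOn (Set.nonempty_Icc.mpr h)
      ((continuous_abs.comp P.continuous).continuousOn)).choose
  else a

/-- The `j`-th virtual root of the monic polynomial with coefficient vector `c`,
defined inductively as the minimizer of `|P|` between consecutive virtual roots
of `P/d`, infinite endpoints being handled by the Cauchy root bound `bnd`. -/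
noncomputable def vroot : (d : ℕ) → ℤ → (Fin d → ℝ) → ℝ
  | 0, _, _ => 0
  | d + 1, j, c =>
    Rmin (if 1 < j then vroot d (j - 1) (dCoeff c) else -(bnd c))
      (if j < (d : ℤ) + 1 then vroot d j (dCoeff c) else bnd c)
      (monicPoly (d + 1) c)

namespace List

theorem Pairwise.lt_length_filter_iff {α : Type*} [Preorder α] {l : List α}
    (hl : l.Pairwise (· ≤ ·)) {p : α → Bool} (hp : ∀ ⦃x y⦄, x ≤ y → p y → p x) {i : ℕ}
    (hi : i < l.length) : i < (l.filter p).length ↔ p l[i] := by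
  induction l generalizing i with
  | nil => simp at hi
  | cons a l ih =>
    obtain ⟨hal, hl⟩ := List.pairwise_cons.mp hl
    by_cases hpa : p a
    · cases i with
      | zero => simp [hpa]
      | succ i => simp [List.filter_cons_of_pos hpa, ih hl (by simpa using hi)]
    · have hfalse : ∀ x ∈ a :: l, p x = false := fun x hx => by
        rcases List.mem_cons.mp hx with rfl | hx
        · simpa using hpa
        · simpa using fun h => hpa (hp (hal x hx) h)
      rw [List.filter_eq_nil_iff.mpr (by simpa using hfalse), hfalse _ (List.getElem_mem hi)]
      simp

end List

namespace Multiset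

variable {α : Type*} [LinearOrder α]

theorem lt_card_filter_iff_sort_getD {S : Multiset α} {p : α → Prop} [DecidablePred p]
    (hp : ∀ ⦃x y⦄, x ≤ y → p y → p x) {i : ℕ} (hi : i < card S) (x₀ : α) :
    i < card (S.filter p) ↔ p ((S.sort (· ≤ ·)).getD i x₀) := by
  have hi' : i < (S.sort (· ≤ ·)).length := by rwa [length_sort]
  conv_lhs => rw [← sort_eq S (· ≤ ·)]
  rw [filter_coe, coe_card, List.getD_eq_getElem _ _ hi']
  simpa using (pairwise_sort S (· ≤ ·)).lt_length_filter_iff (p := fun x => decide (p x))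
    (by simpa using hp) hi'

theorem sort_getD_mem {S : Multiset α} {i : ℕ} (hi : i < card S) (x₀ : α) :
    (S.sort (· ≤ ·)).getD i x₀ ∈ S := by
  have hi' : i < (S.sort (· ≤ ·)).length := by rwa [length_sort]
  rw [List.getD_eq_getElem _ _ hi', ← mem_sort (· ≤ ·)]
  exact List.getElem_mem hi'

theorem exists_sort_getD_eq {S : Multiset α} {z : α} (hz : z ∈ S) (x₀ : α) :
    ∃ k < card S, (S.sort (· ≤ ·)).getD k x₀ = z := by
  obtain ⟨k, hk, rfl⟩ := List.mem_iff_getElem.mp ((mem_sort (· ≤ ·)).mpr hz)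
  exact ⟨k, by rwa [length_sort] at hk, List.getD_eq_getElem _ _ hk⟩

theorem sort_getD_le_sort_getD {S : Multiset α} {k i : ℕ} (hki : k ≤ i) (hi : i < card S)
    (x₀ : α) : (S.sort (· ≤ ·)).getD k x₀ ≤ (S.sort (· ≤ ·)).getD i x₀ := by
  have hi' : i < (S.sort (· ≤ ·)).length := by rwa [length_sort]
  rw [List.getD_eq_getElem _ _ hi', List.getD_eq_getElem _ _ (hki.trans_lt hi')]
  exact (pairwise_sort S (· ≤ ·)).rel_get_of_le (a := ⟨k, _⟩) (b := ⟨i, hi'⟩) hki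

theorem notMem_Ioo_sort_getD {S : Multiset α} {i : ℕ} (hi : i ≤ card S) (lo up x₀ : α) {z : α}
    (hz : z ∈ S) :
    z ∉ Set.Ioo (if 0 < i then (S.sort (· ≤ ·)).getD (i - 1) x₀ else lo)
      (if i < card S then (S.sort (· ≤ ·)).getD i x₀ else up) := by
  rintro ⟨hlo, hup⟩
  obtain ⟨k, hk, rfl⟩ := exists_sort_getD_eq hz x₀
  rcases lt_or_ge k i with hki | hik
  · rw [if_pos (by omega)] at hlo
    exact (sort_getD_le_sort_getD (Nat.le_sub_one_of_lt hki) (by omega) x₀).not_gt hlo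
  · rw [if_pos (by omega)] at hup
    exact (sort_getD_le_sort_getD hik hk x₀).not_gt hup

theorem card_filter_le_add_card_filter_lt (S : Multiset α) (t : α) :
    card (S.filter (· ≤ t)) + card (S.filter (t < ·)) = card S := by
  simpa [not_le] using congrArg card (filter_add_not (· ≤ t) S)

end Multiset

namespace Polynomial

theorem card_roots_filter_toFinset_le_derivative_sdiff_succ (p : ℝ[X]) {q : ℝ → Prop}
    [DecidablePred q] (hq : {x | q x}.OrdConnected) :
    (p.roots.filter q).toFinset.card ≤
      ((p.derivative.roots.filter q).toFinset \ (p.roots.filter q).toFinset).card + 1 := by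
  rcases eq_or_ne (derivative p) 0 with hp' | hp'
  · rw [eq_C_of_derivative_eq_zero hp']
    simp
  have hp : p ≠ 0 := ne_of_apply_ne derivative (by rwa [derivative_zero])
  refine Finset.card_le_sdiff_of_interleaved fun x hx y hy hxy _ => ?_
  simp only [Multiset.mem_toFinset, Multiset.mem_filter, mem_roots hp] at hx hy
  obtain ⟨z, hz, hz'⟩ := exists_deriv_eq_zero hxy p.continuousOn (hx.1.trans hy.1.symm)
  refine ⟨z, ?_, hz⟩
  simp only [Multiset.mem_toFinset, Multiset.mem_filter, mem_roots hp', IsRoot, ← p.deriv]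
  exact ⟨hz', hq.out hx.2 hy.2 (Ioo_subset_Icc_self hz)⟩

theorem card_roots_filter_le_derivative (p : ℝ[X]) {q : ℝ → Prop} [DecidablePred q]
    (hq : {x | q x}.OrdConnected) :
    Multiset.card (p.roots.filter q) ≤ Multiset.card (p.derivative.roots.filter q) + 1 := by
  classical
  -- A root of `p` of multiplicity `m` is a root of `p'` of multiplicity at least `m - 1`, and
  -- Rolle adds a root of `p'` strictly between any two consecutive distinct roots.
  set M := p.roots.filter q
  set M' := p.derivative.roots.filter q
  have hmult : ∀ x ∈ M.toFinset, M.count x - 1 ≤ M'.count x := fun x hx => by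
    have hqx := (Multiset.mem_filter.mp (Multiset.mem_toFinset.mp hx)).2
    rw [Multiset.count_filter_of_pos hqx, Multiset.count_filter_of_pos hqx, count_roots,
      count_roots]
    exact rootMultiplicity_sub_one_le_derivative_rootMultiplicity p x
  calc Multiset.card M = ∑ x ∈ M.toFinset, (M.count x - 1) + M.toFinset.card := by
        rw [← Multiset.toFinset_sum_count_eq, Finset.card_eq_sum_ones, ← Finset.sum_add_distrib]
        refine Finset.sum_congr rfl fun x hx => (Nat.sub_add_cancel ?_).symm
        exact Multiset.one_le_count_iff_mem.mpr (Multiset.mem_toFinset.mp hx)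
    _ ≤ ∑ x ∈ M.toFinset, M'.count x + (∑ x ∈ M'.toFinset \ M.toFinset, M'.count x + 1) := by
        gcongr with x hx
        · exact hmult x hx
        · refine (card_roots_filter_toFinset_le_derivative_sdiff_succ p hq).trans ?_
          rw [Finset.card_eq_sum_ones]
          gcongr with x hx
          exact Multiset.one_le_count_iff_mem.mpr
            (Multiset.mem_toFinset.mp (Finset.mem_sdiff.mp hx).1)
    _ = Multiset.card M' + 1 := by
        rw [← add_assoc, ← Finset.sum_union Finset.disjoint_sdiff, Multiset.sum_count_eq_card]
        intro x hx
        rw [Finset.union_sdiff_self_eq_union]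
        exact Finset.mem_union_right _ (Multiset.mem_toFinset.mpr hx)

variable {p : ℝ[X]}

theorem card_roots_derivative_of_card_roots_eq_natDegree
    (hp : Multiset.card p.roots = p.natDegree) :
    Multiset.card p.derivative.roots = p.natDegree - 1 := by
  have := (card_roots' p.derivative).trans (natDegree_derivative_le p)
  have := card_roots_le_derivative p
  omega

theorem sort_roots_derivative_getD_le {i : ℕ} (hi : i < Multiset.card p.derivative.roots)
    (hi' : i + 1 < Multiset.card p.roots) :
    (p.derivative.roots.sort (· ≤ ·)).getD i 0 ≤ (p.roots.sort (· ≤ ·)).getD (i + 1) 0 := by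
  by_contra! h
  set t := (p.derivative.roots.sort (· ≤ ·)).getD i 0
  have hP := (Multiset.lt_card_filter_iff_sort_getD (p := (· < t))
    (fun _ _ hxy hy => hxy.trans_lt hy) hi' 0).mpr h
  have hP' := (Multiset.lt_card_filter_iff_sort_getD (p := (· < t))
    (fun _ _ hxy hy => hxy.trans_lt hy) hi 0).not.mpr (lt_irrefl t)
  have := card_roots_filter_le_derivative p (q := (· < t)) ordConnected_Iio
  omega

theorem sort_roots_getD_le_derivative (hp : Multiset.card p.roots = p.natDegree) {i : ℕ}
    (hi : i < Multiset.card p.derivative.roots) :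
    (p.roots.sort (· ≤ ·)).getD i 0 ≤ (p.derivative.roots.sort (· ≤ ·)).getD i 0 := by
  by_contra! h
  set t := (p.derivative.roots.sort (· ≤ ·)).getD i 0
  have hcard := card_roots_derivative_of_card_roots_eq_natDegree hp
  have hP := (Multiset.lt_card_filter_iff_sort_getD (p := (· ≤ t))
    (fun _ _ hxy hy => hxy.trans hy) (by omega) 0).not.mpr (not_le.mpr h)
  have hP' := (Multiset.lt_card_filter_iff_sort_getD (p := (· ≤ t))
    (fun _ _ hxy hy => hxy.trans hy) hi 0).mpr le_rfl
  -- On `(t, ∞)`, `p` has at least `n - i` roots but `p'` at most `n - 2 - i`, where `n` is the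
  -- number of roots of `p`.
  have := card_roots_filter_le_derivative p (q := (t < ·)) ordConnected_Ioi
  have := p.roots.card_filter_le_add_card_filter_lt t
  have := p.derivative.roots.card_filter_le_add_card_filter_lt t
  omega

theorem sort_roots_getD_mem_Icc (hp : Multiset.card p.roots = p.natDegree) {B : ℝ}
    (hB : ∀ x ∈ p.roots, |x| ≤ B) {i : ℕ} (hi : i < Multiset.card p.roots) :
    (p.roots.sort (· ≤ ·)).getD i 0 ∈
      Icc (if 0 < i then (p.derivative.roots.sort (· ≤ ·)).getD (i - 1) 0 else -B)
        (if i < Multiset.card p.derivative.roots then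
          (p.derivative.roots.sort (· ≤ ·)).getD i 0 else B) := by
  have hcard := card_roots_derivative_of_card_roots_eq_natDegree hp
  have hbound := abs_le.mp (hB _ (Multiset.sort_getD_mem hi 0))
  constructor
  · split_ifs with h
    · simpa [Nat.sub_add_cancel h] using
        sort_roots_derivative_getD_le (p := p) (i := i - 1) (by omega) (by omega)
    · exact hbound.1
  · split_ifs with h
    · exact sort_roots_getD_le_derivative hp h
    · exact hbound.2

theorem eq_of_isRoot_of_derivative_ne_zero {a b x y : ℝ}
    (hp : ∀ z ∈ Ioo a b, p.derivative.eval z ≠ 0) (hx : x ∈ Icc a b) (hy : y ∈ Icc a b)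
    (hpx : p.IsRoot x) (hpy : p.IsRoot y) : x = y := by
  wlog hxy : x < y generalizing x y
  · rcases (not_lt.mp hxy).eq_or_lt with h | h
    · exact h.symm
    · exact (this hy hx hpy hpx h).symm
  obtain ⟨z, hz, hz'⟩ := exists_deriv_eq_zero hxy p.continuousOn (hpx.trans hpy.symm)
  exact absurd (by rwa [p.deriv] at hz') (hp z ⟨hx.1.trans_lt hz.1, hz.2.trans_le hy.2⟩)

theorem degree_sum_C_mul_X_pow_lt {R : Type*} [Semiring R] (d : ℕ) (c : Fin d → R) :
    (∑ i : Fin d, C (c i) * X ^ (i : ℕ)).degree < (d : WithBot ℕ) :=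
  (degree_sum_le _ _).trans_lt <| (Finset.sup_lt_iff (WithBot.bot_lt_coe d)).mpr fun i _ =>
    (degree_C_mul_X_pow_le _ _).trans_lt (WithBot.coe_lt_coe.mpr i.isLt)

end Polynomial

theorem Rmin_eq_of_isRoot {a b r : ℝ} {P : ℝ[X]} (hr : r ∈ Icc a b) (hPr : P.IsRoot r)
    (hP' : ∀ z ∈ Ioo a b, P.derivative.eval z ≠ 0) : Rmin a b P = r := by
  have hab : a ≤ b := hr.1.trans hr.2
  rw [Rmin, dif_pos hab]
  obtain ⟨hmem, hmin⟩ := (isCompact_Icc.exists_isMinOn (nonempty_Icc.mpr hab)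
    (continuous_abs.comp P.continuous).continuousOn).choose_spec
  refine eq_of_isRoot_of_derivative_ne_zero hP' hmem hr (abs_nonpos_iff.mp ?_) hPr
  simpa [hPr.eq_zero] using isMinOn_iff.mp hmin r hr

theorem monicPoly_monic (d : ℕ) (c : Fin d → ℝ) : (monicPoly d c).Monic :=
  monic_X_pow_add (degree_sum_C_mul_X_pow_lt d c)

theorem natDegree_monicPoly (d : ℕ) (c : Fin d → ℝ) : (monicPoly d c).natDegree = d := by
  rw [monicPoly, natDegree_add_eq_left_of_degree_lt, natDegree_X_pow]
  simpa using degree_sum_C_mul_X_pow_lt d c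

theorem coeff_monicPoly {d : ℕ} (c : Fin d → ℝ) {i : ℕ} (hi : i < d) :
    (monicPoly d c).coeff i = c ⟨i, hi⟩ := by
  simp only [monicPoly, coeff_add, coeff_X_pow, hi.ne, if_false, zero_add, finsetSum_coeff,
    coeff_C_mul, mul_ite, mul_one, mul_zero]
  rw [Finset.sum_eq_single ⟨i, hi⟩ (fun b _ hb => if_neg fun h => hb (Fin.ext h.symm)) (by simp)]
  exact if_pos rfl

theorem abs_lt_bnd_of_isRoot {d : ℕ} {c : Fin d → ℝ} {z : ℝ} (hz : (monicPoly d c).IsRoot z) :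
    |z| < bnd c := by
  have hnonneg : 0 ≤ ⨆ i, |c i| := Real.iSup_nonneg fun i : Fin d => abs_nonneg (c i)
  have hsup : (Finset.range d).sup (fun i => ‖(monicPoly d c).coeff i‖₊)
      ≤ (⨆ i, |c i|).toNNReal := Finset.sup_le fun i hi => by
    rw [coeff_monicPoly c (Finset.mem_range.mp hi), Real.le_toNNReal_iff_coe_le hnonneg]
    simpa using le_ciSup (f := fun k => |c k|) (finite_range _).bddAbove ⟨i, _⟩
  have hcauchy : cauchyBound (monicPoly d c) ≤ (⨆ i, |c i|).toNNReal + 1 := by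
    rw [cauchyBound, (monicPoly_monic d c).leadingCoeff, natDegree_monicPoly, nnnorm_one, div_one]
    gcongr
  calc |z| = ‖z‖₊ := by simp
    _ < cauchyBound (monicPoly d c) := by
      exact_mod_cast hz.norm_lt_cauchyBound (monicPoly_monic d c).ne_zero
    _ ≤ ((⨆ i, |c i|).toNNReal + 1 : NNReal) := by exact_mod_cast hcauchy
    _ = bnd c := by rw [NNReal.coe_add, Real.coe_toNNReal _ hnonneg, bnd, NNReal.coe_one, add_comm]

theorem derivative_monicPoly (d : ℕ) (c : Fin (d + 1) → ℝ) :
    derivative (monicPoly (d + 1) c) = C ((d : ℝ) + 1) * monicPoly d (dCoeff c) := by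
  rw [monicPoly, monicPoly, derivative_add, derivative_X_pow, derivative_sum, Fin.sum_univ_succ,
    mul_add, Finset.mul_sum]
  congr 1
  · simp
  · rw [show derivative (C (c 0) * X ^ ((0 : Fin (d + 1)) : ℕ)) = 0 by simp, zero_add]
    refine Finset.sum_congr rfl fun i _ => ?_
    rw [derivative_C_mul_X_pow, Fin.val_succ, add_tsub_cancel_right, ← mul_assoc, ← C_mul, dCoeff]
    congr 2
    push_cast
    field_simp

theorem roots_derivative_monicPoly (d : ℕ) (c : Fin (d + 1) → ℝ) :
    (derivative (monicPoly (d + 1) c)).roots = (monicPoly d (dCoeff c)).roots := by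
  rw [derivative_monicPoly]
  exact roots_C_mul _ (by positivity)

theorem card_roots_monicPoly_dCoeff {d : ℕ} {c : Fin (d + 1) → ℝ}
    (hyp : Multiset.card (monicPoly (d + 1) c).roots = d + 1) :
    Multiset.card (monicPoly d (dCoeff c)).roots = d := by
  rw [← roots_derivative_monicPoly, card_roots_derivative_of_card_roots_eq_natDegree
    (by rw [hyp, natDegree_monicPoly]), natDegree_monicPoly, Nat.add_sub_cancel]

theorem vroot_succ_eq_sort_getD (d : ℕ) (c : Fin (d + 1) → ℝ)
    (hyp : Multiset.card (monicPoly (d + 1) c).roots = d + 1)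
    (ih : ∀ k : ℕ, 1 ≤ k → k ≤ d →
      vroot d k (dCoeff c) = ((monicPoly d (dCoeff c)).roots.sort (· ≤ ·)).getD (k - 1) 0)
    {j : ℕ} (hj1 : 1 ≤ j) (hjd : j ≤ d + 1) :
    vroot (d + 1) j c = ((monicPoly (d + 1) c).roots.sort (· ≤ ·)).getD (j - 1) 0 := by
  set P := monicPoly (d + 1) c
  have hP : P ≠ 0 := (monicPoly_monic _ c).ne_zero
  have hP' : derivative P ≠ 0 := fun h => by
    simpa [P, natDegree_monicPoly] using derivative_eq_zero.mp h
  have hcard : Multiset.card (derivative P).roots = d := by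
    rw [roots_derivative_monicPoly, card_roots_monicPoly_dCoeff hyp]
  rw [← roots_derivative_monicPoly] at ih
  have hleft : (if 1 < (j : ℤ) then vroot d (j - 1) (dCoeff c) else -bnd c) =
      if 0 < j - 1 then ((derivative P).roots.sort (· ≤ ·)).getD (j - 1 - 1) 0 else -bnd c := by
    split_ifs with h₁ h₂ h₂
    · rw [show (j : ℤ) - 1 = (j - 1 : ℕ) by omega, ih (j - 1) (by omega) (by omega)]
    any_goals omega
    rfl
  have hright : (if (j : ℤ) < d + 1 then vroot d j (dCoeff c) else bnd c) =
      if j - 1 < Multiset.card (derivative P).roots then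
        ((derivative P).roots.sort (· ≤ ·)).getD (j - 1) 0 else bnd c := by
    split_ifs with h₁ h₂ h₂
    · exact ih j hj1 (by omega)
    any_goals omega
    rfl
  have hIcc := sort_roots_getD_mem_Icc (by rw [hyp, natDegree_monicPoly])
    (fun x hx => (abs_lt_bnd_of_isRoot ((mem_roots hP).mp hx)).le) (i := j - 1) (by omega)
  rw [vroot, hleft, hright]
  refine Rmin_eq_of_isRoot hIcc ((mem_roots hP).mp (Multiset.sort_getD_mem (by omega) 0))
    fun z hz hz' => Multiset.notMem_Ioo_sort_getD (i := j - 1) (by omega) _ _ 0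
      ((mem_roots hP').mpr hz') hz

theorem vroot_eq_sort_getD (d : ℕ) (c : Fin (d + 1) → ℝ)
    (hyp : Multiset.card (monicPoly (d + 1) c).roots = d + 1) {j : ℕ} (hj1 : 1 ≤ j)
    (hjd : j ≤ d + 1) :
    vroot (d + 1) j c = ((monicPoly (d + 1) c).roots.sort (· ≤ ·)).getD (j - 1) 0 := by
  induction d generalizing j with
  | zero => exact vroot_succ_eq_sort_getD 0 c hyp (fun k hk1 hk0 => by omega) hj1 hjd
  | succ d ih =>
    exact vroot_succ_eq_sort_getD _ c hyp
      (fun k hk1 hkd => ih (dCoeff c) (card_roots_monicPoly_dCoeff hyp) hk1 hkd) hj1 hjd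

theorem vroot_of_hyperbolic_general (d : ℕ) (c : Fin d → ℝ)
    (hyp : (monicPoly d c).roots.card = d)
    (j : ℕ) (hj1 : 1 ≤ j) (hjd : j ≤ d) (u : ℝ)
    (hu : ((monicPoly d c).roots.sort (· ≤ ·)).getD (j - 1) 0 = u) :
    vroot d (j : ℤ) c = u := by
  obtain ⟨d, rfl⟩ := Nat.exists_eq_add_one_of_ne_zero (by omega : d ≠ 0)
  exact hu ▸ vroot_eq_sort_getD d c hyp hj1 hjd

/-- if the monic degree-`d` polynomial `P` is hyperbolic (all of
its `d` roots are real) and `u` is its `j`-th real root in increasing order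
(with multiplicity), then `ρ_{d,j}(P) = u`. -/
theorem vroot_of_hyperbolic (d : ℕ) (hd : 0 < d) (c : Fin d → ℝ)
    (hyp : (monicPoly d c).roots.card = d)
    (j : ℕ) (hj1 : 1 ≤ j) (hjd : j ≤ d) (u : ℝ)
    (hu : ((monicPoly d c).roots.sort (· ≤ ·)).getD (j - 1) 0 = u) :
    vroot d (j : ℤ) c = u :=
  vroot_of_hyperbolic_general d c hyp j hj1 hjd u hu
end

section
/- For every monic real polynomial P of degree d > 0 and every integer r, the interlacing inequalities ρ_{d,r}(P) ≤ ρ_{d−1,r}(P'/d) ≤ ρ_{d,r+1}(P) hold between the virtual roots of P and those of its normalized derivative. -/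
open Polynomial Set

/-- Virtual roots with the conventions `ρ_{d,j} = -∞` for `j ≤ 0` and `+∞` for `j > d`. -/
noncomputable def vrootE (d : ℕ) (j : ℤ) (c : Fin d → ℝ) : EReal :=
  if j ≤ 0 then ⊥ else if (d : ℤ) < j then ⊤ else ((vroot d j c : ℝ) : EReal)

lemma one_le_bnd {d : ℕ} (c : Fin d → ℝ) : 1 ≤ bnd c := by
  have h : 0 ≤ ⨆ i, |c i| := by
    rcases isEmpty_or_nonempty (Fin d) with h | h
    · simp [Real.iSup_of_isEmpty]
    · exact Real.iSup_nonneg fun i => abs_nonneg _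
  simp only [bnd]; linarith

lemma bnd_dCoeff_le {d : ℕ} (c : Fin (d + 1) → ℝ) : bnd (dCoeff c) ≤ bnd c := by
  simp only [bnd]
  have h : (⨆ i, |dCoeff c i|) ≤ ⨆ i, |c i| := by
    rcases isEmpty_or_nonempty (Fin d) with h | h
    · rw [Real.iSup_of_isEmpty]
      exact Real.iSup_nonneg fun i => abs_nonneg _
    · apply Real.iSup_le _ (Real.iSup_nonneg fun i => abs_nonneg _)
      intro i
      have h1 : |dCoeff c i| ≤ |c i.succ| := by
        rw [dCoeff, abs_div, abs_mul]
        have hd : |((d : ℝ) + 1)| = (d : ℝ) + 1 := abs_of_pos (by positivity)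
        have hi : |((i : ℕ) : ℝ) + 1| = ((i : ℕ) : ℝ) + 1 := abs_of_pos (by positivity)
        rw [hd, hi, div_le_iff₀ (by positivity)]
        have hle : ((i : ℕ) : ℝ) + 1 ≤ (d : ℝ) + 1 := by
          have := i.isLt; push_cast; linarith [show ((i:ℕ):ℝ) ≤ (d:ℝ) from by exact_mod_cast this.le]
        nlinarith [abs_nonneg (c i.succ)]
      refine h1.trans (le_ciSup (f := fun i => |c i|) (Set.Finite.bddAbove (Set.finite_range _)) i.succ)
  linarith

lemma Rmin_mem {a b : ℝ} (h : a ≤ b) (P : Polynomial ℝ) : Rmin a b P ∈ Icc a b := by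
  rw [Rmin, dif_pos h]
  exact (isCompact_Icc.exists_isMinOn (Set.nonempty_Icc.mpr h)
      ((continuous_abs.comp P.continuous).continuousOn)).choose_spec.1

lemma le_Rmin (a b : ℝ) (P : Polynomial ℝ) : a ≤ Rmin a b P := by
  rw [Rmin]
  split
  · next h => exact ((isCompact_Icc.exists_isMinOn (Set.nonempty_Icc.mpr h)
      ((continuous_abs.comp P.continuous).continuousOn)).choose_spec.1).1
  · exact le_refl _

lemma Rmin_le {a b : ℝ} (h : a ≤ b) (P : Polynomial ℝ) : Rmin a b P ≤ b :=
  (Rmin_mem h P).2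

lemma vroot_key : ∀ (d : ℕ) (c : Fin d → ℝ),
    (∀ j : ℤ, 1 ≤ j → j ≤ (d : ℤ) → -(bnd c) ≤ vroot d j c ∧ vroot d j c ≤ bnd c) ∧
    (∀ j : ℤ, 1 ≤ j → j + 1 ≤ (d : ℤ) → vroot d j c ≤ vroot d (j + 1) c) := by
  intro d
  induction d with
  | zero =>
    intro c
    constructor <;> intro j h1 h2 <;> [skip; skip] <;> exfalso <;> omega
  | succ d ih =>
    intro c
    obtain ⟨ihb, ihm⟩ := ih (dCoeff c)
    have hbnd := bnd_dCoeff_le c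
    have h1b := one_le_bnd c
    set A : ℤ → ℝ := fun j => if 1 < j then vroot d (j - 1) (dCoeff c) else -(bnd c) with hA
    set B : ℤ → ℝ := fun j => if j < (d : ℤ) + 1 then vroot d j (dCoeff c) else bnd c with hB
    have hv : ∀ j : ℤ, vroot (d + 1) j c = Rmin (A j) (B j) (monicPoly (d + 1) c) := by
      intro j; rfl
    have hAlow : ∀ j : ℤ, 1 ≤ j → j ≤ (d : ℤ) + 1 → -(bnd c) ≤ A j := by
      intro j hj1 hj2
      simp only [hA]
      split
      · next h =>
        have := (ihb (j - 1) (by omega) (by omega)).1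
        linarith
      · exact le_refl _
    have hBhigh : ∀ j : ℤ, 1 ≤ j → j ≤ (d : ℤ) + 1 → B j ≤ bnd c := by
      intro j hj1 hj2
      simp only [hB]
      split
      · next h =>
        have := (ihb j hj1 (by omega)).2
        linarith
      · exact le_refl _
    have hAB : ∀ j : ℤ, 1 ≤ j → j ≤ (d : ℤ) + 1 → A j ≤ B j := by
      intro j hj1 hj2
      simp only [hA, hB]
      split
      · next h =>
        split
        · next h' =>
          have := ihm (j - 1) (by omega) (by omega)
          simpa using this
        · next h' =>
          have := (ihb (j - 1) (by omega) (by omega)).2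
          linarith
      · next h =>
        split
        · next h' =>
          have := (ihb j hj1 (by omega)).1
          linarith
        · next h' => linarith
    constructor
    · intro j hj1 hj2
      rw [hv]
      constructor
      · exact le_trans (hAlow j hj1 hj2) (le_Rmin _ _ _)
      · exact le_trans (Rmin_le (hAB j hj1 hj2) _) (hBhigh j hj1 hj2)
    · intro j hj1 hj2
      rw [hv, hv]
      have hBj : B j = vroot d j (dCoeff c) := by
        simp only [hB]; rw [if_pos (by omega)]
      have hAj : A (j + 1) = vroot d j (dCoeff c) := by
        simp only [hA]; rw [if_pos (by omega)]; ring_nf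
      calc Rmin (A j) (B j) (monicPoly (d + 1) c) ≤ B j :=
            Rmin_le (hAB j hj1 (by omega)) _
        _ = A (j + 1) := by rw [hBj, hAj]
        _ ≤ Rmin (A (j + 1)) (B (j + 1)) (monicPoly (d + 1) c) := le_Rmin _ _ _

/-- interlacing of the virtual roots of `P` (monic of degree
`d+1 > 0`) and of its normalized derivative:
`ρ_{d+1,r}(P) ≤ ρ_{d,r}(P'/(d+1)) ≤ ρ_{d+1,r+1}(P)` for every integer `r`. -/
theorem vroot_interlacing (d : ℕ) (c : Fin (d + 1) → ℝ) (r : ℤ) :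
    vrootE (d + 1) r c ≤ vrootE d r (dCoeff c) ∧
    vrootE d r (dCoeff c) ≤ vrootE (d + 1) (r + 1) c := by
  obtain ⟨hb, hm⟩ := vroot_key (d + 1) c
  constructor
  · -- vrootE (d+1) r c ≤ vrootE d r (dCoeff c)
    rcases le_or_gt r 0 with h0 | h0
    · simp only [vrootE, if_pos h0]; exact bot_le
    rcases le_or_gt r (d : ℤ) with hd1 | hd1
    · -- 1 ≤ r ≤ d
      simp only [vrootE, if_neg (by omega : ¬ r ≤ 0)]
      rw [if_neg (by push_cast; omega : ¬ (((d : ℕ) + 1 : ℕ) : ℤ) < r),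
        if_neg (by omega : ¬ (d : ℤ) < r)]
      have key : vroot (d + 1) r c ≤ vroot d r (dCoeff c) := by
        obtain ⟨ihb, ihm⟩ := vroot_key d (dCoeff c)
        have hbnd := bnd_dCoeff_le c
        have hAB : (if 1 < r then vroot d (r - 1) (dCoeff c) else -(bnd c)) ≤
            (if r < (d : ℤ) + 1 then vroot d r (dCoeff c) else bnd c) := by
          split
          · next h =>
            rw [if_pos (by omega)]
            simpa using ihm (r - 1) (by omega) (by omega)
          · next h =>
            rw [if_pos (by omega)]
            have := (ihb r (by omega) hd1).1
            linarith
        have hv : vroot (d + 1) r c =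
            Rmin (if 1 < r then vroot d (r - 1) (dCoeff c) else -(bnd c))
              (if r < (d : ℤ) + 1 then vroot d r (dCoeff c) else bnd c)
              (monicPoly (d + 1) c) := rfl
        rw [hv]
        rw [if_pos (by omega : r < (d : ℤ) + 1)] at hAB ⊢
        exact Rmin_le hAB _
      exact_mod_cast key
    · -- r > d, so vrootE d r = ⊤
      simp only [vrootE, if_neg (by omega : ¬ r ≤ 0), if_pos hd1]
      exact le_top
  · -- vrootE d r (dCoeff c) ≤ vrootE (d+1) (r+1) c
    rcases le_or_gt r 0 with h0 | h0
    · simp only [vrootE, if_pos h0]; exact bot_le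
    rcases le_or_gt r (d : ℤ) with hd1 | hd1
    · -- 1 ≤ r ≤ d
      simp only [vrootE, if_neg (by omega : ¬ r ≤ 0), if_neg (by omega : ¬ r + 1 ≤ 0),
        if_neg (by omega : ¬ (d : ℤ) < r),
        if_neg (by push_cast; omega : ¬ (((d : ℕ) + 1 : ℕ) : ℤ) < r + 1)]
      have key : vroot d r (dCoeff c) ≤ vroot (d + 1) (r + 1) c := by
        have hv : vroot (d + 1) (r + 1) c =
            Rmin (if 1 < r + 1 then vroot d (r + 1 - 1) (dCoeff c) else -(bnd c))
              (if r + 1 < (d : ℤ) + 1 then vroot d (r + 1) (dCoeff c) else bnd c)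
              (monicPoly (d + 1) c) := rfl
        rw [hv, if_pos (by omega : (1 : ℤ) < r + 1),
          show r + 1 - 1 = r from by ring]
        exact le_Rmin _ _ _
      exact_mod_cast key
    · -- r > d
      simp only [vrootE, if_neg (by omega : ¬ r + 1 ≤ 0),
        if_pos (by push_cast; omega : (((d : ℕ) + 1 : ℕ) : ℤ) < r + 1)]
      exact le_top
end

section
/- (Thom's Lemma) Let P be a real polynomial of degree d and σ = (σ_1,…,σ_d) a sequence of signs in {+,−}. Let F_σ(P) = {α ∈ ℝ : σ_i · P^{(d−i)}(α) ≥ 0 for i = 1,…,d} (sign conditions on all derivatives of P of degree 1 through d, in the large sense) and U_σ(P) the same set with strict inequalities. If F_σ(P) is nonempty then it is a point or a closed interval (possibly unbounded), its interior is U_σ(P), and every finite endpoint of F_σ(P) is a root of some derivative P^{(j)} (0 ≤ j < d). -/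
/-!
Induction on the degree: the conditions on `P', P'', …` cut out an interval on which `P'` has
constant sign (by its own condition, or because `P'` is constant), so `P` is monotone there and
the condition on `P` still leaves an interval. At an interior point where `P^{(j)}` vanishes,
`±P^{(j)}` has a local minimum, so `P^{(j+1)}` vanishes there as well by Fermat's theorem;
climbing up, the nonzero constant `P^{(d)}` would vanish. Hence the interior is the strict set,
and a frontier point makes one of the inequalities an equality.
-/

open Polynomial Set

def sgn (b : Bool) : ℝ := if b then 1 else -1

theorem sgn_ne_zero (b : Bool) : sgn b ≠ 0 := by
  cases b <;> norm_num [sgn]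

theorem Fin.forall_rev_iff {d : ℕ} (p : Fin d → ℕ → Prop) :
    (∀ i : Fin d, p i (d - (i + 1))) ↔ ∀ j : Fin d, p j.rev j := by
  rw [Fin.rev_surjective.forall]
  refine forall_congr' fun j => ?_
  rw [Fin.val_rev, show d - (d - (j + 1) + 1) = j by omega]

theorem Set.OrdConnected.setOf_nonneg_const_mul {S : Set ℝ} (hS : S.OrdConnected) {f : ℝ → ℝ}
    (hf : MonotoneOn f S ∨ AntitoneOn f S) (c : ℝ) :
    {x ∈ S | 0 ≤ c * f x}.OrdConnected := by
  refine ⟨fun x hx z hz y hy => ?_⟩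
  have hyS : y ∈ S := hS.out hx.1 hz.1 hy
  refine ⟨hyS, ?_⟩
  rcases hf with hf | hf <;> rcases le_total 0 c with hc | hc
  · exact hx.2.trans (mul_le_mul_of_nonneg_left (hf hx.1 hyS hy.1) hc)
  · exact hz.2.trans (mul_le_mul_of_nonpos_left (hf hyS hz.1 hy.2) hc)
  · exact hz.2.trans (mul_le_mul_of_nonneg_left (hf hyS hz.1 hy.2) hc)
  · exact hx.2.trans (mul_le_mul_of_nonpos_left (hf hx.1 hyS hy.1) hc)

namespace Polynomial

theorem monotoneOn_or_antitoneOn_eval (P : ℝ[X]) {S : Set ℝ} (hS : Convex ℝ S)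
    (h : (∀ x ∈ S, 0 ≤ (derivative P).eval x) ∨ (∀ x ∈ S, (derivative P).eval x ≤ 0)) :
    MonotoneOn (fun x => P.eval x) S ∨ AntitoneOn (fun x => P.eval x) S := by
  rcases h with h | h
  · refine .inl <| monotoneOn_of_deriv_nonneg hS P.continuousOn P.differentiableOn fun x hx => ?_
    rw [Polynomial.deriv]
    exact h x (interior_subset hx)
  · refine .inr <| antitoneOn_of_deriv_nonpos hS P.continuousOn P.differentiableOn fun x hx => ?_
    rw [Polynomial.deriv]
    exact h x (interior_subset hx)

theorem eval_iterate_derivative_natDegree_ne_zero {P : ℝ[X]} (hP : P ≠ 0) (x : ℝ) :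
    (derivative^[P.natDegree] P).eval x ≠ 0 := by
  rw [eq_C_of_natDegree_le_zero ((natDegree_iterate_derivative P _).trans (Nat.sub_self _).le),
    eval_C, coeff_iterate_derivative]
  simp [hP]

variable (P : ℝ[X]) {d : ℕ} (τ : Fin d → Bool)

/-- `τ j` is the sign imposed on `P^{(j)}`; the paper's `σ_i` is `τ (d - i)`. -/
def thomSet : Set ℝ := {x | ∀ j : Fin d, 0 ≤ sgn (τ j) * (derivative^[j] P).eval x}

def strictThomSet : Set ℝ := {x | ∀ j : Fin d, 0 < sgn (τ j) * (derivative^[j] P).eval x}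

theorem isClosed_thomSet : IsClosed (thomSet P τ) := by
  simp only [thomSet, ofPred_forall]
  exact isClosed_iInter fun j => isClosed_le continuous_const (by fun_prop)

theorem isOpen_strictThomSet : IsOpen (strictThomSet P τ) := by
  simp only [strictThomSet, ofPred_forall]
  exact isOpen_iInter_of_finite fun j => isOpen_lt continuous_const (by fun_prop)

theorem strictThomSet_subset_thomSet : strictThomSet P τ ⊆ thomSet P τ :=
  fun _ hx j => (hx j).le

theorem thomSet_of_fin_zero (τ : Fin 0 → Bool) : thomSet P τ = univ :=
  eq_univ_of_forall fun _ j => j.elim0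

theorem thomSet_succ (τ : Fin (d + 1) → Bool) :
    thomSet P τ = {x ∈ thomSet (derivative P) (Fin.tail τ) | 0 ≤ sgn (τ 0) * P.eval x} := by
  ext x
  simp only [thomSet, Fin.forall_fin_succ (n := d), mem_ofPred_eq, Fin.val_zero, Fin.val_succ,
    Function.iterate_zero_apply, Function.iterate_succ_apply, Fin.tail]
  exact and_comm

theorem eval_nonneg_or_nonpos_on_thomSet (hP : P.natDegree ≤ d) :
    (∀ x ∈ thomSet P τ, 0 ≤ P.eval x) ∨ (∀ x ∈ thomSet P τ, P.eval x ≤ 0) := by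
  cases d with
  | zero =>
    rw [eq_C_of_natDegree_le_zero hP]
    rcases le_total 0 (P.coeff 0) with h | h
    · exact .inl fun _ _ => by simpa using h
    · exact .inr fun _ _ => by simpa using h
  | succ d =>
    have h0 (x) (hx : x ∈ thomSet P τ) : 0 ≤ sgn (τ 0) * P.eval x := hx 0
    cases hτ : τ 0
    · exact .inr fun x hx => by simpa [sgn, hτ] using h0 x hx
    · exact .inl fun x hx => by simpa [sgn, hτ] using h0 x hx

theorem ordConnected_thomSet (hP : P.natDegree ≤ d) : (thomSet P τ).OrdConnected := by
  induction d generalizing P with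
  | zero => simpa only [thomSet_of_fin_zero] using ordConnected_univ
  | succ d ih =>
    have hP' : (derivative P).natDegree ≤ d := (natDegree_derivative_le P).trans (by omega)
    have hS := ih (derivative P) (Fin.tail τ) hP'
    rw [thomSet_succ]
    exact hS.setOf_nonneg_const_mul (P.monotoneOn_or_antitoneOn_eval hS.convex
      (eval_nonneg_or_nonpos_on_thomSet _ _ hP')) _

variable {P τ}

theorem eval_iterate_derivative_succ_eq_zero {x : ℝ} (hx : x ∈ interior (thomSet P τ))
    {j : ℕ} (hj : j < d) (h0 : (derivative^[j] P).eval x = 0) :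
    (derivative^[j + 1] P).eval x = 0 := by
  have hmin : IsLocalMin (fun y => sgn (τ ⟨j, hj⟩) * (derivative^[j] P).eval y) x := by
    filter_upwards [isOpen_interior.mem_nhds hx] with y hy
    simpa [h0] using interior_subset hy ⟨j, hj⟩
  have hderiv := hmin.hasDerivAt_eq_zero (((derivative^[j] P).hasDerivAt x).const_mul _)
  rw [Function.iterate_succ_apply']
  simpa [sgn_ne_zero] using hderiv

theorem eval_iterate_derivative_ne_zero_of_mem_interior (hP : P.natDegree = d) {x : ℝ}
    (hx : x ∈ interior (thomSet P τ)) (j : Fin d) : (derivative^[j] P).eval x ≠ 0 := by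
  intro h0
  have hvanish (m : ℕ) (hjm : j ≤ m) : m ≤ d → (derivative^[m] P).eval x = 0 := by
    induction m, hjm using Nat.le_induction with
    | base => exact fun _ => h0
    | succ m _ ih => exact fun hm => eval_iterate_derivative_succ_eq_zero hx hm (ih (by omega))
  have hP0 : P ≠ 0 := by
    rintro rfl
    rw [natDegree_zero] at hP
    subst hP
    exact j.elim0
  exact eval_iterate_derivative_natDegree_ne_zero hP0 x (hP ▸ hvanish d j.isLt.le le_rfl)

theorem interior_thomSet (hP : P.natDegree = d) : interior (thomSet P τ) = strictThomSet P τ :=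
  Subset.antisymm
    (fun _ hx j => (interior_subset hx j).lt_of_ne
      (mul_ne_zero (sgn_ne_zero _) (eval_iterate_derivative_ne_zero_of_mem_interior hP hx j)).symm)
    (interior_maximal (strictThomSet_subset_thomSet P τ) (isOpen_strictThomSet P τ))

theorem exists_eval_iterate_derivative_eq_zero_of_mem_frontier (hP : P.natDegree = d) {x : ℝ}
    (hx : x ∈ frontier (thomSet P τ)) : ∃ j : Fin d, (derivative^[j] P).eval x = 0 := by
  rw [(isClosed_thomSet P τ).frontier_eq, interior_thomSet hP] at hx
  obtain ⟨hxF, hxU⟩ := hx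
  simp only [strictThomSet, mem_ofPred_eq, not_forall, not_lt] at hxU
  obtain ⟨j, hj⟩ := hxU
  exact ⟨j, (mul_eq_zero.1 (le_antisymm hj (hxF j))).resolve_left (sgn_ne_zero _)⟩

end Polynomial

theorem thom_lemma_general (P : Polynomial ℝ) (d : ℕ) (hdeg : P.natDegree = d)
    (σ : Fin d → Bool)
    (F U : Set ℝ)
    (hF : F = {α : ℝ | ∀ i : Fin d,
      0 ≤ sgn (σ i) * (Polynomial.derivative^[d - ((i : ℕ) + 1)] P).eval α})
    (hU : U = {α : ℝ | ∀ i : Fin d,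
      0 < sgn (σ i) * (Polynomial.derivative^[d - ((i : ℕ) + 1)] P).eval α}) :
    IsClosed F ∧ F.OrdConnected ∧ interior F = U ∧
    ∀ x ∈ frontier F, ∃ j < d, (Polynomial.derivative^[j] P).eval x = 0 := by
  obtain rfl : F = thomSet P (σ ∘ Fin.rev) := by
    rw [hF]; ext x; exact Fin.forall_rev_iff fun i j => 0 ≤ sgn (σ i) * (derivative^[j] P).eval x
  obtain rfl : U = strictThomSet P (σ ∘ Fin.rev) := by
    rw [hU]; ext x; exact Fin.forall_rev_iff fun i j => 0 < sgn (σ i) * (derivative^[j] P).eval x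
  refine ⟨isClosed_thomSet _ _, ordConnected_thomSet _ _ hdeg.le, interior_thomSet hdeg,
    fun x hx => ?_⟩
  obtain ⟨j, hj⟩ := exists_eval_iterate_derivative_eq_zero_of_mem_frontier hdeg hx
  exact ⟨j, j.isLt, hj⟩

/-- Thom's Lemma: for `P` of degree `d` and a sign sequence
`σ = (σ_1, …, σ_d)` (here `σ i` is `σ_{i+1}`), if the closed set
`F_σ(P) = {α | σ_i · P^{(d-i)}(α) ≥ 0, i = 1,…,d}` is nonempty, it is a point
or a closed interval (i.e. closed and order-connected), its interior is the
strict-inequality set `U_σ(P)`, and every finite endpoint of `F_σ(P)` is a root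
of some derivative `P^{(j)}` with `0 ≤ j < d`. -/
theorem thom_lemma (P : Polynomial ℝ) (d : ℕ) (hdeg : P.natDegree = d)
    (σ : Fin d → Bool)
    (F U : Set ℝ)
    (hF : F = {α : ℝ | ∀ i : Fin d,
      0 ≤ sgn (σ i) * (Polynomial.derivative^[d - ((i : ℕ) + 1)] P).eval α})
    (hU : U = {α : ℝ | ∀ i : Fin d,
      0 < sgn (σ i) * (Polynomial.derivative^[d - ((i : ℕ) + 1)] P).eval α})
    (hne : F.Nonempty) :
    IsClosed F ∧ F.OrdConnected ∧ interior F = U ∧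
    ∀ x ∈ frontier F, ∃ j < d, (Polynomial.derivative^[j] P).eval x = 0 :=
  thom_lemma_general P d hdeg σ F U hF hU
end

section
/- Let U ⊆ ℝ^n be convex, X a metric space, F : U → Ms_k(X) a uniformly continuous map to the space of k-element multisets of X with modulus of uniform continuity ω (i.e. d(u,u') < ω(ε) implies the multiset distance between F(u) and F(u') is < ε), and f : U → X a continuous function with f(u) ∈ F(u) for all u. Then f is uniformly continuous with modulus ε ↦ ω(ε/2k). -/
open Set

/-- The multiset (semi)distance on `k`-tuples: the min over permutations of the
sup of pointwise distances. -/
noncomputable def msDist {k : ℕ} {X : Type*} [MetricSpace X]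
    (x y : Fin k → X) : ℝ :=
  ⨅ σ : Equiv.Perm (Fin k), ⨆ i : Fin k, dist (x i) (y (σ i))

/-! Fix `u, u'` and put `ε' = ε / 2k`. Every value of `f` on the segment `[u, u']` lies within `ε'`
of a point of the multiset `F u`. Link two points of `F u` when they are closer than `2ε'`. The
balls of radius `ε'` around the points linked by a chain to a point near `f u`, and those around
the remaining points, form two disjoint open sets covering the connected image of the segment;
hence `f u'` is near that chain component too. A chain has at most `k - 1` links, so
`dist (f u) (f u') < ε' + 2ε'(k - 1) + ε' = ε`. -/

theorem exists_dist_lt_of_msDist_lt {k : ℕ} {X : Type*} [MetricSpace X] {x y : Fin k → X}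
    {ε : ℝ} (h : msDist x y < ε) (i : Fin k) : ∃ j, dist (x i) (y j) < ε := by
  have : Nonempty (Fin k) := ⟨i⟩
  obtain ⟨σ, hσ⟩ := exists_eq_ciInf_of_finite
    (f := fun σ : Equiv.Perm (Fin k) => ⨆ i, dist (x i) (y (σ i)))
  refine ⟨σ i, ?_⟩
  calc dist (x i) (y (σ i)) ≤ ⨆ i, dist (x i) (y (σ i)) :=
        le_ciSup (finite_range fun i => dist (x i) (y (σ i))).bddAbove i
    _ = msDist x y := hσ
    _ < ε := h

namespace Metric

variable {ι X : Type*} [PseudoMetricSpace X]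

def closeGraph (c : ι → X) (δ : ℝ) : SimpleGraph ι where
  Adj i j := i ≠ j ∧ dist (c i) (c j) < δ
  symm := ⟨fun i j h => ⟨h.1.symm, dist_comm (c i) (c j) ▸ h.2⟩⟩
  loopless := ⟨fun _ h => h.1 rfl⟩

variable {c : ι → X} {δ : ℝ}

theorem dist_le_mul_length_of_walk {i j : ι} (p : (closeGraph c δ).Walk i j) :
    dist (c i) (c j) ≤ δ * p.length := by
  induction p with
  | nil => simp
  | @cons i l j hadj p ih =>
    rw [SimpleGraph.Walk.length_cons, Nat.cast_succ]
    have : dist (c i) (c l) < δ := hadj.2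
    linarith [dist_triangle (c i) (c l) (c j)]

theorem dist_le_of_reachable [Fintype ι] (hδ : 0 ≤ δ) {i j : ι}
    (h : (closeGraph c δ).Reachable i j) :
    dist (c i) (c j) ≤ δ * (Fintype.card ι - 1) := by
  classical
  obtain ⟨p⟩ := h
  have hlen : (p.bypass.length : ℝ) ≤ Fintype.card ι - 1 := by
    have := p.bypass_isPath.length_lt
    rw [le_sub_iff_add_le]
    exact_mod_cast this
  calc dist (c i) (c j) ≤ δ * p.bypass.length := dist_le_mul_length_of_walk _
    _ ≤ δ * (Fintype.card ι - 1) := by gcongr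

end Metric

open Metric

section

variable {ι X : Type*} [PseudoMetricSpace X] {c : ι → X} {S : Set X} {ε : ℝ} {x y : X}

theorem IsPreconnected.exists_reachable_closeGraph_of_subset_iUnion_ball (hS : IsPreconnected S)
    (hcover : S ⊆ ⋃ j, ball (c j) ε) (hx : x ∈ S) (hy : y ∈ S) {i : ι} (hxi : x ∈ ball (c i) ε) :
    ∃ j, (closeGraph c (2 * ε)).Reachable i j ∧ y ∈ ball (c j) ε := by
  set G := closeGraph c (2 * ε)
  have hdisj : Disjoint (⋃ j ∈ {j | G.Reachable i j}, ball (c j) ε)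
      (⋃ j ∈ {j | ¬ G.Reachable i j}, ball (c j) ε) := by
    simp only [Set.disjoint_left, mem_iUnion₂, mem_ofPred_eq, mem_ball, not_exists]
    rintro z ⟨j, hij, hzj⟩ j' hij' hzj'
    refine hij' (hij.trans ?_)
    by_cases hjj' : j = j'
    · exact hjj' ▸ SimpleGraph.Reachable.refl j
    · refine SimpleGraph.Adj.reachable ⟨hjj', ?_⟩
      linarith [dist_triangle_left (c j) (c j') z]
  have hsplit : S ⊆ (⋃ j ∈ {j | G.Reachable i j}, ball (c j) ε) ∪
      (⋃ j ∈ {j | ¬ G.Reachable i j}, ball (c j) ε) := by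
    intro z hz
    obtain ⟨j, hzj⟩ := mem_iUnion.1 (hcover hz)
    by_cases hij : G.Reachable i j
    · exact Or.inl (mem_biUnion hij hzj)
    · exact Or.inr (mem_biUnion hij hzj)
  have hS_left := hS.subset_left_of_subset_union
    (isOpen_biUnion fun _ _ => isOpen_ball) (isOpen_biUnion fun _ _ => isOpen_ball) hdisj hsplit
    ⟨x, hx, mem_biUnion (SimpleGraph.Reachable.refl i) hxi⟩
  simpa only [mem_iUnion₂, mem_ofPred_eq, exists_prop] using hS_left hy

theorem IsPreconnected.dist_lt_of_subset_iUnion_ball [Fintype ι] (hS : IsPreconnected S)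
    (hcover : S ⊆ ⋃ j, ball (c j) ε) (hx : x ∈ S) (hy : y ∈ S) :
    dist x y < 2 * Fintype.card ι * ε := by
  obtain ⟨i, hxi⟩ := mem_iUnion.1 (hcover hx)
  obtain ⟨j, hij, hyj⟩ := hS.exists_reachable_closeGraph_of_subset_iUnion_ball hcover hx hy hxi
  rw [mem_ball] at hxi hyj
  have hε : 0 ≤ 2 * ε := by linarith [dist_nonneg (x := x) (y := c i)]
  calc dist x y ≤ dist x (c i) + dist (c i) (c j) + dist (c j) y := dist_triangle4 _ _ _ _
    _ < ε + 2 * ε * (Fintype.card ι - 1) + ε := by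
      linarith [dist_le_of_reachable hε hij, dist_comm y (c j)]
    _ = 2 * Fintype.card ι * ε := by ring

end

/-- if `F : U → Ms_k(X)` is uniformly continuous with modulus `ω`
on a convex `U ⊆ ℝ^n`, and `f : U → X` is a continuous selection of `F` (for
all `u ∈ U`, `f u` is one of the `k` elements of the multiset `F u`), then `f`
is uniformly continuous with modulus `ε ↦ ω(ε/2k)`. -/
theorem selection_uniform_continuity
    {n k : ℕ} {X : Type*} [MetricSpace X]
    (U : Set (EuclideanSpace ℝ (Fin n))) (hU : Convex ℝ U)
    (F : EuclideanSpace ℝ (Fin n) → Fin k → X)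
    (f : EuclideanSpace ℝ (Fin n) → X)
    (ω : ℝ → ℝ)
    (hF : ∀ ε > 0, ∀ u ∈ U, ∀ u' ∈ U,
      dist u u' < ω ε → msDist (F u) (F u') < ε)
    (hf : ContinuousOn f U)
    (hsel : ∀ u ∈ U, ∃ i : Fin k, f u = F u i) :
    ∀ ε > 0, ∀ u ∈ U, ∀ u' ∈ U,
      dist u u' < ω (ε / (2 * k)) → dist (f u) (f u') < ε := by
  intro ε hε u hu u' hu' huu'
  obtain ⟨i₀, -⟩ := hsel u hu
  have hk : (0 : ℝ) < k := Nat.cast_pos.2 i₀.pos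
  have hseg : segment ℝ u u' ⊆ U := hU.segment_subset hu hu'
  have hcover : f '' segment ℝ u u' ⊆ ⋃ j, ball (F u j) (ε / (2 * k)) := by
    rintro _ ⟨z, hz, rfl⟩
    obtain ⟨i, hi⟩ := hsel z (hseg hz)
    have hzu : dist z u < ω (ε / (2 * k)) :=
      (mem_closedBall.1 (segment_subset_closedBall_left u u' hz)).trans_lt huu'
    obtain ⟨j, hj⟩ := exists_dist_lt_of_msDist_lt (hF _ (by positivity) z (hseg hz) u hu hzu) i
    exact mem_iUnion.2 ⟨j, hi ▸ hj⟩
  have hconn : IsPreconnected (f '' segment ℝ u u') :=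
    (convex_segment u u').isPreconnected.image f (hf.mono hseg)
  calc dist (f u) (f u') < 2 * Fintype.card (Fin k) * (ε / (2 * k)) :=
        hconn.dist_lt_of_subset_iUnion_ball hcover (mem_image_of_mem f (left_mem_segment ℝ u u'))
          (mem_image_of_mem f (right_mem_segment ℝ u u'))
    _ = ε := by rw [Fintype.card_fin]; field_simp
end

section
/- There is no expression of the function f(X) = X on ℝ as a finite Inf–Sup combination of continuous root-selection functions of the single polynomial Q(X,Y) = Y² − X², i.e. of functions of X depending only on the coefficient vector (0, −X²) of Q: any such combination is an even function of X and hence cannot equal X on all of ℝ. -/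
open Set

/-- Finite Inf–Sup combinations of functions from a set `S`. -/
inductive InfSup (S : Set (ℝ → ℝ)) : (ℝ → ℝ) → Prop
  | base {f : ℝ → ℝ} : f ∈ S → InfSup S f
  | inf {f g : ℝ → ℝ} : InfSup S f → InfSup S g →
      InfSup S (fun x => min (f x) (g x))
  | sup {f g : ℝ → ℝ} : InfSup S f → InfSup S g →
      InfSup S (fun x => max (f x) (g x))

lemma infsup_even {h : ℝ → ℝ}
    (H : InfSup {h' : ℝ → ℝ | ∃ g : ℝ × ℝ → ℝ, ∀ x : ℝ, h' x = g (0, -x ^ 2)} h) :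
    ∀ x : ℝ, h (-x) = h x := by
  induction H with
  | base hf =>

      obtain ⟨g, hg⟩ := hf
      intro x
      rw [hg, hg]
      ring_nf
  | inf _ _ ih1 ih2 => intro x; simp [ih1 x, ih2 x]
  | sup _ _ ih1 ih2 => intro x; simp [ih1 x, ih2 x]

/-- no finite Inf–Sup combination of root-selection functions of
the single polynomial `Q(X,Y) = Y² - X²`, i.e. of functions of `X` that factor
through the coefficient vector `(0, -X²)` of `Q(X,·)`, can equal the function
`f(X) = X` on all of `ℝ`. -/
theorem no_infsup_of_root_selections_eq_id :
    ¬ ∃ h : ℝ → ℝ,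
      InfSup {h' : ℝ → ℝ | ∃ g : ℝ × ℝ → ℝ, ∀ x : ℝ, h' x = g (0, -x ^ 2)} h ∧
      ∀ x : ℝ, h x = x := by
  rintro ⟨h, H, hid⟩
  have := infsup_even H 1
  rw [hid, hid] at this
  norm_num at this
end
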